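/- arXiv:2406.02871 — 5 statements merged into one kernel-verified Lean document; each statement's English description precedes it below -/
import Mathlib

section
/- Let S, A, O be finite nonempty types; T : S → A → S → ℝ with T s a s' ≥ 0 and ∑_{s'} T s a s' = 1 for all s, a (transition probabilities); Z : S → A → O → ℝ with Z s' a o ≥ 0 and ∑_{o} Z s' a o = 1 for all s', a (observation probabilities); R : S → A → ℝ (rewards); and γ ∈ ℝ with 0 ≤ γ ≤ 1. A belief is an element b of the standard simplex Δ(S) = { b : S → ℝ | b s ≥ 0 for all s, ∑_s b s = 1 }. For b ∈ Δ(S), a ∈ A, o ∈ O define m(b,a,o)(s') = ∑_s b s · T s a s' · Z s' a o, p(b,a,o) = ∑_{s'} m(b,a,o)(s'), and when p(b,a,o) > 0 the Bayes-updated belief b^{a,o} = m(b,a,o) / p(b,a,o). The POMDP Bellman operator on functions V : Δ(S) → ℝ is (B V)(b) = max_{a ∈ A} ( ∑_s b s · R s a + γ · ∑_{o : p(b,a,o) > 0} p(b,a,o) · V(b^{a,o}) ). Suppose V_MDP : S → ℝ satisfies the fully-observable MDP Bellman optimality equation V_MDP s = max_{a ∈ A} ( R s a + γ · ∑_{s'}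 T s a s' · V_MDP s' ) for all s. Define U : Δ(S) → ℝ by U(b) = ∑_s b s · V_MDP s. Then (B U)(b) ≤ U(b) for every b ∈ Δ(S). -/
/-- Unnormalized successor belief: `m(b,a,o)(s') = ∑ s, b s * T s a s' * Z s' a o`. -/
noncomputable def beliefNum {S A O : Type*} [Fintype S]
    (T : S → A → S → ℝ) (Z : S → A → O → ℝ)
    (b : S → ℝ) (a : A) (o : O) : S → ℝ :=
  fun s' => ∑ s, b s * T s a s' * Z s' a o

/-- Probability of observing `o` after taking `a` in belief `b`:
`p(b,a,o) = ∑ s', m(b,a,o)(s')`. -/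
noncomputable def obsProb {S A O : Type*} [Fintype S]
    (T : S → A → S → ℝ) (Z : S → A → O → ℝ)
    (b : S → ℝ) (a : A) (o : O) : ℝ :=
  ∑ s', beliefNum T Z b a o s'

/-- Bayes-updated belief `b^{a,o} = m(b,a,o) / p(b,a,o)`. -/
noncomputable def bayesUpdate {S A O : Type*} [Fintype S]
    (T : S → A → S → ℝ) (Z : S → A → O → ℝ)
    (b : S → ℝ) (a : A) (o : O) : S → ℝ :=
  fun s' => beliefNum T Z b a o s' / obsProb T Z b a o

open scoped Classical in
/-- The POMDP Bellman operator:
`(B V)(b) = max_a (∑ s, b s * R s a + γ * ∑_{o : p(b,a,o) > 0} p(b,a,o) * V (b^{a,o}))`. -/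
noncomputable def pomdpBellman {S A O : Type*} [Fintype S] [Fintype A] [Nonempty A] [Fintype O]
    (T : S → A → S → ℝ) (Z : S → A → O → ℝ) (R : S → A → ℝ) (γ : ℝ)
    (V : (S → ℝ) → ℝ) (b : S → ℝ) : ℝ :=
  Finset.univ.sup' Finset.univ_nonempty (fun a =>
    ∑ s, b s * R s a +
      γ * ∑ o ∈ Finset.univ.filter (fun o => 0 < obsProb T Z b a o),
        obsProb T Z b a o * V (bayesUpdate T Z b a o))

theorem vMDP_is_supersolution {S A O : Type*}
    [Fintype S] [Nonempty S] [Fintype A] [Nonempty A] [Fintype O] [Nonempty O]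
    (T : S → A → S → ℝ) (hT0 : ∀ s a s', 0 ≤ T s a s') (hT1 : ∀ s a, ∑ s', T s a s' = 1)
    (Z : S → A → O → ℝ) (hZ0 : ∀ s' a o, 0 ≤ Z s' a o) (hZ1 : ∀ s' a, ∑ o, Z s' a o = 1)
    (R : S → A → ℝ) (γ : ℝ) (hγ0 : 0 ≤ γ) (hγ1 : γ ≤ 1)
    (Vmdp : S → ℝ)
    (hVmdp : ∀ s, Vmdp s = Finset.univ.sup' Finset.univ_nonempty
      (fun a => R s a + γ * ∑ s', T s a s' * Vmdp s'))
    (U : (S → ℝ) → ℝ) (hU : ∀ b, U b = ∑ s, b s * Vmdp s) :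
    ∀ b ∈ stdSimplex ℝ S, pomdpBellman T Z R γ U b ≤ U b := by
  classical
  intro b hb
  obtain ⟨hb0, hb1⟩ := hb
  apply Finset.sup'_le
  intro a _
  have hm0 : ∀ o s', 0 ≤ beliefNum T Z b a o s' := by
    intro o s'
    exact Finset.sum_nonneg fun s _ =>
      mul_nonneg (mul_nonneg (hb0 s) (hT0 s a s')) (hZ0 s' a o)
  set F : O → ℝ := fun o => ∑ s', beliefNum T Z b a o s' * Vmdp s' with hF
  have hfilter : ∑ o ∈ Finset.univ.filter (fun o => 0 < obsProb T Z b a o),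
      obsProb T Z b a o * U (bayesUpdate T Z b a o) = ∑ o, F o := by
    rw [Finset.sum_filter]
    apply Finset.sum_congr rfl
    intro o _
    by_cases hp : 0 < obsProb T Z b a o
    · rw [if_pos hp, hU, hF]
      rw [Finset.mul_sum]
      apply Finset.sum_congr rfl
      intro s' _
      simp only [bayesUpdate]
      field_simp
    · rw [if_neg hp, hF]
      have hple : obsProb T Z b a o ≤ 0 := le_of_not_gt hp
      have hzero : ∀ s', beliefNum T Z b a o s' = 0 := by
        intro s'
        have h := (Finset.sum_eq_zero_iff_of_nonneg (fun s' _ => hm0 o s')).mp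
          (le_antisymm hple (Finset.sum_nonneg fun s' _ => hm0 o s'))
        exact h s' (Finset.mem_univ s')
      symm
      apply Finset.sum_eq_zero
      intro s' _
      rw [hzero s', zero_mul]
  have key : ∀ s', ∑ o, beliefNum T Z b a o s' = ∑ s, b s * T s a s' := by
    intro s'
    simp only [beliefNum]
    rw [Finset.sum_comm]
    apply Finset.sum_congr rfl
    intro s _
    rw [← Finset.mul_sum, hZ1 s' a, mul_one]
  have hsumF : ∑ o, F o = ∑ s, b s * ∑ s', T s a s' * Vmdp s' := by
    calc ∑ o, F o = ∑ s', (∑ o, beliefNum T Z b a o s') * Vmdp s' := by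
          rw [Finset.sum_comm]
          simp [hF, Finset.sum_mul]
      _ = ∑ s', (∑ s, b s * T s a s') * Vmdp s' := by simp only [key]
      _ = ∑ s, b s * ∑ s', T s a s' * Vmdp s' := by
          simp only [Finset.sum_mul, Finset.mul_sum]
          rw [Finset.sum_comm]
          apply Finset.sum_congr rfl
          intro s _
          apply Finset.sum_congr rfl
          intro s' _
          ring
  rw [hfilter, hsumF, hU]
  calc ∑ s, b s * R s a + γ * ∑ s, b s * ∑ s', T s a s' * Vmdp s'
      = ∑ s, b s * (R s a + γ * ∑ s', T s a s' * Vmdp s') := by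
        rw [Finset.mul_sum, ← Finset.sum_add_distrib]
        apply Finset.sum_congr rfl
        intro s _
        ring
    _ ≤ ∑ s, b s * Vmdp s := by
        apply Finset.sum_le_sum
        intro s _
        apply mul_le_mul_of_nonneg_left _ (hb0 s)
        rw [hVmdp s]
        exact Finset.le_sup' (fun a => R s a + γ * ∑ s', T s a s' * Vmdp s') (Finset.mem_univ a)
end

section
/- Let S, A, O be finite nonempty types; T : S → A → S → ℝ with T s a s' ≥ 0 and ∑_{s'} T s a s' = 1 for all s, a (transition probabilities); Z : S → A → O → ℝ with Z s' a o ≥ 0 and ∑_{o} Z s' a o = 1 for all s', a (observation probabilities); R : S → A → ℝ (rewards); and γ ∈ ℝ with 0 ≤ γ ≤ 1. A belief is an element b of the standard simplex Δ(S) = { b : S → ℝ | b s ≥ 0 for all s, ∑_s b s = 1 }. For b ∈ Δ(S), a ∈ A, o ∈ O define m(b,a,o)(s') = ∑_s b s · T s a s' · Z s' a o, p(b,a,o) = ∑_{s'} m(b,a,o)(s'), and when p(b,a,o) > 0 the Bayes-updated belief b^{a,o} = m(b,a,o) / p(b,a,o). The POMDP Bellman operator on functions V : Δ(S) → ℝ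 is (B V)(b) = max_{a ∈ A} ( ∑_s b s · R s a + γ · ∑_{o : p(b,a,o) > 0} p(b,a,o) · V(b^{a,o}) ). Suppose V* : Δ(S) → ℝ satisfies V*(b) = (B V*)(b) for all b ∈ Δ(S). Let Γ be a nonempty finite set of α-vectors α : S → ℝ such that for every α ∈ Γ and every b ∈ Δ(S), ∑_s b s · α s ≤ V*(b). Fix a ∈ A and a choice function α̂ : O → Γ, and define the backed-up α-vector β : S → ℝ by β s = R s a + γ · ∑_{o ∈ O} ∑_{s'} T s a s' · Z s' a o · (α̂ o)(s'). Then ∑_s b s · β s ≤ V*(b) for every b ∈ Δ(S). -/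
theorem alpha_vector_backup_sound {S A O : Type*}
    [Fintype S] [Nonempty S] [Fintype A] [Nonempty A] [Fintype O] [Nonempty O]
    (T : S → A → S → ℝ) (hT0 : ∀ s a s', 0 ≤ T s a s') (hT1 : ∀ s a, ∑ s', T s a s' = 1)
    (Z : S → A → O → ℝ) (hZ0 : ∀ s' a o, 0 ≤ Z s' a o) (hZ1 : ∀ s' a, ∑ o, Z s' a o = 1)
    (R : S → A → ℝ) (γ : ℝ) (hγ0 : 0 ≤ γ) (hγ1 : γ ≤ 1)
    (Vstar : (S → ℝ) → ℝ)
    (hfix : ∀ b ∈ stdSimplex ℝ S, Vstar b = pomdpBellman T Z R γ Vstar b)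
    (Γ : Finset (S → ℝ)) (hΓne : Γ.Nonempty)
    (hΓ : ∀ α ∈ Γ, ∀ b ∈ stdSimplex ℝ S, ∑ s, b s * α s ≤ Vstar b)
    (a : A) (αhat : O → (S → ℝ)) (hαhat : ∀ o, αhat o ∈ Γ)
    (β : S → ℝ)
    (hβ : ∀ s, β s = R s a + γ * ∑ o, ∑ s', T s a s' * Z s' a o * αhat o s') :
    ∀ b ∈ stdSimplex ℝ S, ∑ s, b s * β s ≤ Vstar b := by
  classical
  intro b hb
  obtain ⟨hb0, hb1⟩ := hb
  -- nonnegativity of beliefNum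
  have hm0 : ∀ o s', 0 ≤ beliefNum T Z b a o s' := by
    intro o s'
    exact Finset.sum_nonneg fun s _ =>
      mul_nonneg (mul_nonneg (hb0 s) (hT0 s a s')) (hZ0 s' a o)
  have hp0 : ∀ o, 0 ≤ obsProb T Z b a o :=
    fun o => Finset.sum_nonneg fun s' _ => hm0 o s'
  -- key per-observation bound
  have hkey : ∀ o, ∑ s', beliefNum T Z b a o s' * αhat o s' ≤
      (if 0 < obsProb T Z b a o then
        obsProb T Z b a o * Vstar (bayesUpdate T Z b a o) else 0) := by
    intro o
    by_cases hpo : 0 < obsProb T Z b a o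
    · simp only [hpo, if_true]
      have hbu : bayesUpdate T Z b a o ∈ stdSimplex ℝ S := by
        constructor
        · intro s'
          exact div_nonneg (hm0 o s') (hp0 o)
        · simp only [bayesUpdate]
          rw [← Finset.sum_div]
          exact div_self (ne_of_gt hpo)
      have := hΓ (αhat o) (hαhat o) _ hbu
      calc ∑ s', beliefNum T Z b a o s' * αhat o s'
          = obsProb T Z b a o * ∑ s', bayesUpdate T Z b a o s' * αhat o s' := by
            rw [Finset.mul_sum]
            refine Finset.sum_congr rfl fun s' _ => ?_
            simp only [bayesUpdate]
            field_simp
        _ ≤ obsProb T Z b a o * Vstar (bayesUpdate T Z b a o) :=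
            mul_le_mul_of_nonneg_left this (hp0 o)
    · simp only [hpo, if_false]
      have hpz : obsProb T Z b a o = 0 := le_antisymm (not_lt.mp hpo) (hp0 o)
      have hz : ∀ s' ∈ Finset.univ, beliefNum T Z b a o s' = 0 :=
        (Finset.sum_eq_zero_iff_of_nonneg (fun s' _ => hm0 o s')).mp hpz
      rw [Finset.sum_eq_zero fun s' _ => by rw [hz s' (Finset.mem_univ s'), zero_mul]]
  -- rewrite the LHS
  have hLHS : ∑ s, b s * β s = ∑ s, b s * R s a +
      γ * ∑ o, ∑ s', beliefNum T Z b a o s' * αhat o s' := by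
    have : ∀ s, b s * β s = b s * R s a +
        γ * ∑ o, ∑ s', b s * T s a s' * Z s' a o * αhat o s' := by
      intro s
      rw [hβ s, mul_add]
      congr 1
      rw [← mul_assoc, mul_comm (b s) γ, mul_assoc]
      congr 1
      rw [Finset.mul_sum]
      refine Finset.sum_congr rfl fun o _ => ?_
      rw [Finset.mul_sum]
      exact Finset.sum_congr rfl fun s' _ => by ring
    rw [Finset.sum_congr rfl fun s _ => this s, Finset.sum_add_distrib]
    congr 1
    rw [← Finset.mul_sum, Finset.sum_comm]
    congr 1
    refine Finset.sum_congr rfl fun o _ => ?_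
    rw [Finset.sum_comm]
    refine Finset.sum_congr rfl fun s' _ => ?_
    simp only [beliefNum, Finset.sum_mul]
  -- bound by the Bellman value at action a
  have hstep : ∑ s, b s * β s ≤ ∑ s, b s * R s a +
      γ * ∑ o ∈ Finset.univ.filter (fun o => 0 < obsProb T Z b a o),
        obsProb T Z b a o * Vstar (bayesUpdate T Z b a o) := by
    rw [hLHS]
    gcongr
    calc ∑ o, ∑ s', beliefNum T Z b a o s' * αhat o s'
        ≤ ∑ o, (if 0 < obsProb T Z b a o then
            obsProb T Z b a o * Vstar (bayesUpdate T Z b a o) else 0) :=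
          Finset.sum_le_sum fun o _ => hkey o
      _ = ∑ o ∈ Finset.univ.filter (fun o => 0 < obsProb T Z b a o),
            obsProb T Z b a o * Vstar (bayesUpdate T Z b a o) := by
          rw [Finset.sum_ite, Finset.sum_const_zero, add_zero]
  refine hstep.trans ?_
  rw [hfix b ⟨hb0, hb1⟩]
  unfold pomdpBellman
  exact Finset.le_sup' (fun a => ∑ s, b s * R s a +
      γ * ∑ o ∈ Finset.univ.filter (fun o => 0 < obsProb T Z b a o),
        obsProb T Z b a o * Vstar (bayesUpdate T Z b a o)) (Finset.mem_univ a)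
end

section
/- Let A be a finite nonempty type (actions), c > 0 a real constant, Q : ℕ → A → ℝ with a uniform bound M such that |Q n a| ≤ M for all n and a, and let a : ℕ → A be a sequence of selected actions. For n ∈ ℕ and b ∈ A let N n b = |{ k < n | a k = b }| be the number of times b has been selected before time n. Suppose the selection is greedy with respect to the UCB-style index: for every n and every b ∈ A, Q n b + c · √n / (1 + N n b) ≤ Q n (a n) + c · √n / (1 + N n (a n)). Then for every b ∈ A the set { n | a n = b } is infinite. -/
/-!
If some action `b` were chosen only finitely often, its count would stay bounded by some `K`,
so its index would grow like `c √n / (1 + K)`. Since the Q-values are bounded, a greedy choice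
can then never fall on an action already chosen more than `K` times, once `√n` is large.
Hence eventually every action is chosen only while its count is at most `K`, so each action is
chosen finitely often, which is impossible for a sequence indexed by `ℕ` with finitely many values.
-/

open Filter Nat

theorem Nat.finite_setOf_of_eventually_count_le {p : ℕ → Prop} [DecidablePred p] {K : ℕ}
    (h : ∀ᶠ n in atTop, p n → count p n ≤ K) : {n | p n}.Finite := by
  obtain ⟨n₀, hn₀⟩ := eventually_atTop.1 h
  have hbounded : {n | p n ∧ count p n ≤ K}.Finite :=
    Set.Finite.of_finite_image ((Set.finite_Iic K).subset (Set.image_subset_iff.2 fun n hn => hn.2))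
      fun m hm n hn => count_injective hm.1 hn.1
  refine ((Set.finite_Iio n₀).union hbounded).subset fun n hn => ?_
  rcases lt_or_ge n n₀ with hlt | hge
  · exact Or.inl hlt
  · exact Or.inr ⟨hn, hn₀ n hge hn⟩

theorem not_eventually_count_eq_self_le {A : Type*} [Finite A] [DecidableEq A] (a : ℕ → A)
    (K : ℕ) : ¬ ∀ᶠ n in atTop, count (a · = a n) n ≤ K := by
  intro h
  have hfiber (x : A) : {n | a n = x}.Finite :=
    Nat.finite_setOf_of_eventually_count_le (K := K) <| h.mono fun n hn hx => hx ▸ hn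
  refine Set.infinite_univ (Set.finite_iUnion hfiber |>.subset fun n _ => ?_)
  exact Set.mem_iUnion.2 ⟨a n, rfl⟩

theorem le_of_div_one_add_le_div_one_add_add {s M k m : ℝ} (hs : 0 ≤ s) (hk : 0 ≤ k)
    (hkm : k + 1 ≤ m) (h : s / (1 + k) ≤ s / (1 + m) + M) : s ≤ M * (1 + k) * (2 + k) := by
  have hm : s / (1 + m) ≤ s / (2 + k) := div_le_div_of_nonneg_left hs (by linarith) (by linarith)
  have hgap : s / (1 + k) - s / (2 + k) = s / ((1 + k) * (2 + k)) := by
    field_simp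
    ring
  have : s / ((1 + k) * (2 + k)) ≤ M := by linarith
  rwa [div_le_iff₀ (by positivity), ← mul_assoc] at this

theorem eventually_count_selected_le_of_ucb {A : Type*} [DecidableEq A] {c M : ℝ} (hc : 0 < c)
    {Q : ℕ → A → ℝ} (hM : ∀ n b, |Q n b| ≤ M) {a : ℕ → A}
    (hgreedy : ∀ n b, Q n b + c * √n / (1 + (count (a · = b) n : ℝ)) ≤
      Q n (a n) + c * √n / (1 + (count (a · = a n) n : ℝ)))
    {b : A} {K : ℕ} (hK : ∀ n, count (a · = b) n ≤ K) :
    ∀ᶠ n in atTop, count (a · = a n) n ≤ K := by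
  have hlarge : ∀ᶠ n : ℕ in atTop, 2 * M * (1 + K) * (2 + K) < c * √n :=
    ((Real.tendsto_sqrt_atTop.comp tendsto_natCast_atTop_atTop).const_mul_atTop hc).eventually_gt_atTop _
  filter_upwards [hlarge] with n hn
  by_contra! hcount
  set s := c * √n
  have hs : 0 ≤ s := by positivity
  have hb : s / (1 + K) ≤ s / (1 + (count (a · = b) n : ℝ)) :=
    div_le_div_of_nonneg_left hs (by positivity) (by exact_mod_cast Nat.add_le_add_left (hK n) 1)
  have hQ := hgreedy n b
  have hQb := neg_le_of_abs_le (hM n b)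
  have hQa := le_of_abs_le (hM n (a n))
  have hbound : s ≤ 2 * M * (1 + K) * (2 + K) :=
    le_of_div_one_add_le_div_one_add_add (m := count (a · = a n) n) hs (Nat.cast_nonneg K)
      (by exact_mod_cast hcount) (by linarith)
  exact hbound.not_gt hn

open Finset in
theorem ucb_selects_every_action_infinitely_often_general
    {A : Type*} [Fintype A] [DecidableEq A]
    (c : ℝ) (hc : 0 < c)
    (Q : ℕ → A → ℝ) (M : ℝ) (hM : ∀ n b, |Q n b| ≤ M)
    (a : ℕ → A)
    (N : ℕ → A → ℕ)
    (hN : ∀ n b, N n b = ((Finset.range n).filter (fun k => a k = b)).card)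
    (hgreedy : ∀ n b, Q n b + c * Real.sqrt n / (1 + (N n b : ℝ)) ≤
      Q n (a n) + c * Real.sqrt n / (1 + (N n (a n) : ℝ))) :
    ∀ b : A, {n | a n = b}.Infinite := by
  obtain rfl : N = fun n b => count (a · = b) n := by
    ext n b
    rw [hN, count_eq_card_filter_range]
  intro b hb
  exact not_eventually_count_eq_self_le a _ <|
    eventually_count_selected_le_of_ucb hc hM hgreedy (count_le_card hb)

open Finset in
theorem ucb_selects_every_action_infinitely_often
    {A : Type*} [Fintype A] [Nonempty A] [DecidableEq A]
    (c : ℝ) (hc : 0 < c)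
    (Q : ℕ → A → ℝ) (M : ℝ) (hM : ∀ n b, |Q n b| ≤ M)
    (a : ℕ → A)
    (N : ℕ → A → ℕ)
    (hN : ∀ n b, N n b = ((Finset.range n).filter (fun k => a k = b)).card)
    (hgreedy : ∀ n b, Q n b + c * Real.sqrt n / (1 + (N n b : ℝ)) ≤
      Q n (a n) + c * Real.sqrt n / (1 + (N n (a n) : ℝ))) :
    ∀ b : A, {n | a n = b}.Infinite :=
  ucb_selects_every_action_infinitely_often_general c hc Q M hM a N hN hgreedy
end

section
/- Let O be a finite nonempty type (observations), c > 0 a real constant, W : ℕ → O → ℝ with a uniform bound M such that |W n o| ≤ M for all n and o, w : O → ℝ with w o > 0 for all o (observation weights), and let o : ℕ → O be a sequence of selected observations. For n ∈ ℕ and q ∈ O let N n q = |{ k < n | o k = q }| be the number of times q has been selected before time n. Suppose the selection is greedy with respect to the weighted index: for every n and every q ∈ O, W n q + w q · c · √n / (1 + N n q) ≤ W n (o n) + w (o n) · c · √n / (1 + N n (o n)). Then for every q ∈ O the set { n | o n = q } is infinite. -/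
open Finset in
theorem weighted_ucb_selects_every_observation_infinitely_often
    {O : Type*} [Fintype O] [Nonempty O] [DecidableEq O]
    (c : ℝ) (hc : 0 < c)
    (W : ℕ → O → ℝ) (M : ℝ) (hM : ∀ n q, |W n q| ≤ M)
    (w : O → ℝ) (hw : ∀ q, 0 < w q)
    (o : ℕ → O)
    (N : ℕ → O → ℕ)
    (hN : ∀ n q, N n q = ((Finset.range n).filter (fun k => o k = q)).card)
    (hgreedy : ∀ n q, W n q + w q * c * Real.sqrt n / (1 + (N n q : ℝ)) ≤
      W n (o n) + w (o n) * c * Real.sqrt n / (1 + (N n (o n) : ℝ))) :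
    ∀ q : O, {n | o n = q}.Infinite := by
  have hsucc : ∀ n p, N (n+1) p = N n p + if o n = p then 1 else 0 := by
    intro n p
    rw [hN, hN, Finset.range_add_one, Finset.filter_insert]
    split
    · rw [Finset.card_insert_of_notMem (by simp)]
    · simp
  have hmono : ∀ p, Monotone (fun n => N n p) := by
    intro p m n hmn
    simp only [hN]
    exact Finset.card_le_card (Finset.filter_subset_filter _
      (by simpa using Finset.range_subset_range.2 hmn))
  have hM0 : 0 ≤ M := le_trans (abs_nonneg _) (hM 0 (Classical.arbitrary O))
  -- a uniform upper bound on the weights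
  set Wm : ℝ := Finset.univ.sup' Finset.univ_nonempty w with hWmdef
  have hWm : ∀ p, w p ≤ Wm := fun p => Finset.le_sup' w (Finset.mem_univ p)
  intro q
  by_contra hfin
  rw [Set.not_infinite] at hfin
  obtain ⟨T, hT⟩ := hfin.bddAbove
  have hTq : ∀ n, T + 1 ≤ n → o n ≠ q := by
    intro n hn hq
    have : n ≤ T := hT hq
    omega
  set K := N (T+1) q with hK
  have heqK : ∀ n, T + 1 ≤ n → N n q = K := by
    intro n hn
    induction n with
    | zero => omega
    | succ m ih =>
      rcases eq_or_lt_of_le hn with h | h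
      · rw [← h]
      · have hm : T + 1 ≤ m := by omega
        rw [hsucc, if_neg (hTq m hm), ih hm, add_zero]
  have hKbound : ∀ n, N n q ≤ K := by
    intro n
    rcases le_or_gt n (T+1) with h | h
    · exact hmono q h
    · exact le_of_eq (heqK n (le_of_lt h))
  set a : ℝ := w q * c / (1 + (K : ℝ)) with hadef
  have hKpos : (0:ℝ) < 1 + (K:ℝ) := by positivity
  have ha : 0 < a := div_pos (mul_pos (hw q) hc) hKpos
  have hWmpos : 0 < Wm := lt_of_lt_of_le (hw q) (hWm q)
  set T₁ : ℕ := max (T + 2) (⌈(4 * M / a)^2⌉₊ + 1) with hT₁def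
  -- the count of the selected observation is bounded after T₁
  set C : ℕ := ⌈2 * Wm * c / a⌉₊ with hCdef
  have hCbd : ∀ n, T₁ ≤ n → N n (o n) ≤ C := by
    intro n hn
    have hn1 : 1 ≤ n := le_trans (by omega : 1 ≤ T₁) hn
    set s : ℝ := Real.sqrt n with hsdef
    have hs0 : 0 < s := Real.sqrt_pos.2 (by exact_mod_cast hn1)
    have hs4 : 4 * M / a ≤ s := by
      have h1 : (4 * M / a)^2 ≤ (n : ℝ) := by
        have : ⌈(4 * M / a)^2⌉₊ ≤ n := le_trans (by omega) hn
        calc (4 * M / a)^2 ≤ (⌈(4 * M / a)^2⌉₊ : ℝ) := Nat.le_ceil _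
          _ ≤ (n : ℝ) := by exact_mod_cast this
      have h2 : 0 ≤ 4 * M / a := by positivity
      calc 4 * M / a = Real.sqrt ((4 * M / a)^2) := (Real.sqrt_sq h2).symm
        _ ≤ Real.sqrt n := Real.sqrt_le_sqrt h1
    have hg := hgreedy n q
    set Nn : ℕ := N n (o n) with hNndef
    have hNnpos : (0:ℝ) < 1 + (Nn:ℝ) := by positivity
    -- lower bound on the q-index
    have hlow : a * s ≤ w q * c * s / (1 + (N n q : ℝ)) := by
      have hden : (1 : ℝ) + (N n q : ℝ) ≤ 1 + (K : ℝ) := by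
        have : (N n q : ℝ) ≤ (K : ℝ) := by exact_mod_cast hKbound n
        linarith
      have hdpos : (0:ℝ) < 1 + (N n q : ℝ) := by positivity
      calc a * s = w q * c * s / (1 + (K:ℝ)) := by rw [hadef]; ring
        _ ≤ w q * c * s / (1 + (N n q : ℝ)) :=
            div_le_div_of_nonneg_left (mul_nonneg (mul_nonneg (hw q).le hc.le) hs0.le) hdpos hden
    -- upper bound on the selected index
    have hup : w (o n) * c * s / (1 + (Nn:ℝ)) ≤ Wm * c * s / (1 + (Nn:ℝ)) := by
      gcongr ?_ * c * s / (1 + (Nn:ℝ))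
      exact hWm (o n)
    have hWq1 : -M ≤ W n q := neg_le_of_abs_le (hM n q)
    have hWq2 : W n (o n) ≤ M := le_of_abs_le (hM n (o n))
    -- combine: a * s - 2M ≤ Wm * c * s / (1 + Nn)
    have hkey : a * s - 2 * M ≤ Wm * c * s / (1 + (Nn:ℝ)) := by linarith
    have h4M : 4 * M ≤ a * s := by
      have := mul_le_mul_of_nonneg_left hs4 (le_of_lt ha)
      rw [mul_div_assoc'] at this
      have h2 : a * (4 * M / a) = 4 * M := by field_simp
      calc 4 * M = a * (4 * M / a) := h2.symm
        _ ≤ a * s := mul_le_mul_of_nonneg_left hs4 (le_of_lt ha)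
    have hhalf : a * s / 2 ≤ Wm * c * s / (1 + (Nn:ℝ)) := by linarith
    -- multiply through by (1 + Nn) and divide by s
    have hmul : a * s / 2 * (1 + (Nn:ℝ)) ≤ Wm * c * s :=
      (le_div_iff₀ hNnpos).1 hhalf
    have hfinal : a * (1 + (Nn:ℝ)) ≤ 2 * Wm * c := by
      nlinarith [hs0, hmul]
    have hcast : (1 + (Nn:ℝ)) ≤ 2 * Wm * c / a := (le_div_iff₀ ha).2 (by linarith [hfinal])
    have : (Nn : ℝ) ≤ (C : ℝ) := by
      calc (Nn : ℝ) ≤ 1 + (Nn:ℝ) - 1 := by linarith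
        _ ≤ 2 * Wm * c / a - 1 := by linarith
        _ ≤ (C : ℝ) := by
            have := Nat.le_ceil (2 * Wm * c / a)
            rw [hCdef]; linarith
    exact_mod_cast this
  -- counting argument: only finitely many selections can happen after T₁
  set n₀ : ℕ := T₁ + Fintype.card O * (C + 1) + 1 with hn₀def
  have hmaps : ∀ k ∈ Finset.Ico T₁ n₀,
      (o k, N k (o k)) ∈ (Finset.univ : Finset O) ×ˢ Finset.range (C + 1) := by
    intro k hk
    rw [Finset.mem_Ico] at hk
    rw [Finset.mem_product, Finset.mem_range]
    exact ⟨Finset.mem_univ _, Nat.lt_succ_of_le (hCbd k hk.1)⟩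
  have hinj : Set.InjOn (fun k => (o k, N k (o k))) (Finset.Ico T₁ n₀ : Finset ℕ) := by
    have key : ∀ k₁ k₂ : ℕ, k₁ < k₂ → o k₁ = o k₂ → N k₁ (o k₁) ≠ N k₂ (o k₂) := by
      intro k₁ k₂ hlt hoo
      have h1 : N (k₁+1) (o k₁) = N k₁ (o k₁) + 1 := by rw [hsucc, if_pos rfl]
      have h2 : N (k₁+1) (o k₁) ≤ N k₂ (o k₁) := hmono (o k₁) hlt
      rw [hoo]
      rw [← hoo]
      omega
    intro k₁ _ k₂ _ heq
    simp only [Prod.mk.injEq] at heq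
    rcases lt_trichotomy k₁ k₂ with h | h | h
    · exact absurd heq.2 (key k₁ k₂ h heq.1)
    · exact h
    · exact absurd heq.2.symm (key k₂ k₁ h heq.1.symm)
  have hcard := Finset.card_le_card_of_injOn _ hmaps hinj
  rw [Nat.card_Ico, Finset.card_product, Finset.card_univ, Finset.card_range] at hcard
  omega
end

section
/- Let S be a finite nonempty type (states), A a finite nonempty type (actions), P : S → A → S → ℝ with P s a s' ≥ 0 and ∑_{s'} P s a s' = 1 for all s, a (transition probabilities), R : S → A → ℝ (rewards), and γ ∈ ℝ with 0 ≤ γ ≤ 1. The Bellman operator B maps V : S → ℝ to (B V) s = max_{a ∈ A} ( R s a + γ · ∑_{s'} P s a s' · V s' ). Suppose V₀ : S → ℝ satisfies V₀ s ≤ (B V₀) s for all s, and there exists W : S → ℝ with B W = W and V₀ s ≤ W s for all s. Then: (i) the value-iteration sequence Vₙ = B^[n] V₀ is pointwise monotone nondecreasing in n; (ii) Vₙ converges pointwise to a limit V∞ : S → ℝ; (iii) B V∞ = V∞; and (iv) for every fixed point W' of B with V₀ s ≤ W' s for all s, V∞ s ≤ W' s for all s, i.e., V∞ is the least fixed point of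 B above V₀. -/
open Finset in
/-- The Bellman operator on a finite-state MDP with states `S`, actions `A`,
transition probabilities `P`, rewards `R`, and discount factor `γ`:
`(B V) s = max_a (R s a + γ * ∑ s', P s a s' * V s')`. -/
noncomputable def mdpBellman {S A : Type*} [Fintype S] [Fintype A] [Nonempty A]
    (P : S → A → S → ℝ) (R : S → A → ℝ) (γ : ℝ) (V : S → ℝ) : S → ℝ :=
  fun s => univ.sup' univ_nonempty (fun a => R s a + γ * ∑ s', P s a s' * V s')

open Finset in
lemma mdpBellman_mono {S A : Type*} [Fintype S] [Fintype A] [Nonempty A]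
    (P : S → A → S → ℝ) (hP0 : ∀ s a s', 0 ≤ P s a s')
    (R : S → A → ℝ) (γ : ℝ) (hγ0 : 0 ≤ γ)
    {U V : S → ℝ} (h : ∀ s, U s ≤ V s) :
    ∀ s, mdpBellman P R γ U s ≤ mdpBellman P R γ V s := by
  intro s
  apply Finset.sup'_le
  intro a _
  refine le_trans ?_ (Finset.le_sup' _ (Finset.mem_univ a))
  have : ∑ s', P s a s' * U s' ≤ ∑ s', P s a s' * V s' :=
    Finset.sum_le_sum fun s' _ => mul_le_mul_of_nonneg_left (h s') (hP0 s a s')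
  nlinarith [mul_le_mul_of_nonneg_left this hγ0]

theorem value_iteration_converges_to_least_fixed_point
    {S A : Type*} [Fintype S] [Nonempty S] [Fintype A] [Nonempty A]
    (P : S → A → S → ℝ) (hP0 : ∀ s a s', 0 ≤ P s a s') (hP1 : ∀ s a, ∑ s', P s a s' = 1)
    (R : S → A → ℝ) (γ : ℝ) (hγ0 : 0 ≤ γ) (hγ1 : γ ≤ 1)
    (V₀ : S → ℝ) (hsub : ∀ s, V₀ s ≤ mdpBellman P R γ V₀ s)
    (W : S → ℝ) (hWfix : mdpBellman P R γ W = W) (hWle : ∀ s, V₀ s ≤ W s) :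
    ∃ Vinf : S → ℝ,
      (∀ s, Monotone fun n => (mdpBellman P R γ)^[n] V₀ s) ∧
      (∀ s, Filter.Tendsto (fun n => (mdpBellman P R γ)^[n] V₀ s)
        Filter.atTop (nhds (Vinf s))) ∧
      mdpBellman P R γ Vinf = Vinf ∧
      (∀ W' : S → ℝ, mdpBellman P R γ W' = W' → (∀ s, V₀ s ≤ W' s) →
        ∀ s, Vinf s ≤ W' s) := by
  set B := mdpBellman P R γ with hB
  have hBmono : ∀ {U V : S → ℝ}, (∀ s, U s ≤ V s) → ∀ s, B U s ≤ B V s :=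
    fun h => mdpBellman_mono P hP0 R γ hγ0 h
  -- monotone step: Vₙ ≤ Vₙ₊₁
  have hstep : ∀ n s, B^[n] V₀ s ≤ B^[n+1] V₀ s := by
    intro n
    induction n with
    | zero => simpa using hsub
    | succ n ih =>
      intro s
      rw [Function.iterate_succ_apply', Function.iterate_succ_apply']
      exact hBmono ih s
  have hmono : ∀ s, Monotone fun n => B^[n] V₀ s := by
    intro s
    exact monotone_nat_of_le_succ fun n => hstep n s
  -- bounded above by any fixed point ≥ V₀
  have hbound : ∀ (W' : S → ℝ), B W' = W' → (∀ s, V₀ s ≤ W' s) →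
      ∀ n s, B^[n] V₀ s ≤ W' s := by
    intro W' hfix hle n
    induction n with
    | zero => simpa using hle
    | succ n ih =>
      intro s
      rw [Function.iterate_succ_apply']
      calc B (B^[n] V₀) s ≤ B W' s := hBmono ih s
        _ = W' s := by rw [hfix]
  -- define the limit
  set Vinf : S → ℝ := fun s => ⨆ n, B^[n] V₀ s with hVinf
  have hbdd : ∀ s, BddAbove (Set.range fun n => B^[n] V₀ s) := by
    intro s
    exact ⟨W s, by rintro x ⟨n, rfl⟩; exact hbound W hWfix hWle n s⟩
  have htend : ∀ s, Filter.Tendsto (fun n => B^[n] V₀ s) Filter.atTop (nhds (Vinf s)) :=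
    fun s => tendsto_atTop_ciSup (hmono s) (hbdd s)
  refine ⟨Vinf, hmono, htend, ?_, ?_⟩
  · -- fixed point: B Vinf = Vinf
    funext s
    -- B Vₙ s → B Vinf s by continuity, and B Vₙ s = Vₙ₊₁ s → Vinf s
    have h1 : Filter.Tendsto (fun n => B (B^[n] V₀) s) Filter.atTop (nhds (B Vinf s)) := by
      show Filter.Tendsto
        (fun n => Finset.univ.sup' Finset.univ_nonempty
          (fun a => R s a + γ * ∑ s', P s a s' * B^[n] V₀ s')) Filter.atTop
        (nhds (Finset.univ.sup' Finset.univ_nonempty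
          (fun a => R s a + γ * ∑ s', P s a s' * Vinf s')))
      apply Filter.Tendsto.finset_sup'_nhds_apply
      intro a _
      exact tendsto_const_nhds.add ((tendsto_const_nhds.mul
        (tendsto_finset_sum _ fun s' _ => tendsto_const_nhds.mul (htend s'))))
    have h2 : Filter.Tendsto (fun n => B (B^[n] V₀) s) Filter.atTop (nhds (Vinf s)) := by
      have : (fun n => B (B^[n] V₀) s) = fun n => B^[n+1] V₀ s := by
        funext n; rw [Function.iterate_succ_apply']
      rw [this]
      exact (htend s).comp (Filter.tendsto_add_atTop_nat 1)
    exact tendsto_nhds_unique h1 h2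
  · intro W' hfix hle s
    exact le_of_tendsto (htend s) (Filter.Eventually.of_forall fun n => hbound W' hfix hle n s)
end
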